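/- arXiv:1612.01673 — 3 statements merged into one kernel-verified Lean document; each statement's English description precedes it below -/
import Mathlib

section
/- Let (X, 𝒜, μ) be a monotone measure space with μ subadditive. Then for every measurable f : X → [0, ∞] and all A, B ∈ 𝒜 with A ∩ B = ∅, ∫_{A∪B}^pan f dμ = ∫_A^pan f dμ + ∫_B^pan f dμ. -/
open Set Filter
open scoped ENNReal NNReal Topology

variable {X : Type*}

/-- A monotone measure: vanishes on the empty set, positive on the whole space,
and monotone on measurable sets. -/
structure MonotoneMeasure [MeasurableSpace X] (mu : Set X → ℝ≥0∞) : Prop where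
  empty : mu ∅ = 0
  univ_pos : 0 < mu Set.univ
  mono : ∀ ⦃A B : Set X⦄, MeasurableSet A → MeasurableSet B → A ⊆ B → mu A ≤ mu B

/-- A finite measurable partition of `X`. -/
def IsPanPartition [MeasurableSpace X] {n : ℕ} (A : Fin n → Set X) : Prop :=
  (∀ i, MeasurableSet (A i)) ∧ Pairwise (Function.onFun Disjoint A) ∧ (⋃ i, A i) = Set.univ

/-- The `(+,·)`-based pan-integral of a nonnegative function on `X`. -/
noncomputable def panIntegral [MeasurableSpace X] (mu : Set X → ℝ≥0∞) (f : X → ℝ≥0∞) : ℝ≥0∞ :=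
  ⨆ (n : ℕ) (A : Fin n → Set X) (_ : IsPanPartition A) (lam : Fin n → ℝ≥0)
    (_ : ∀ x, ∑ i, Set.indicator (A i) (fun _ => (lam i : ℝ≥0∞)) x ≤ f x),
    ∑ i, (lam i : ℝ≥0∞) * mu (A i)

/-- The pan-integral of `f` on a set `A`, i.e. the pan-integral of `f·χ_A` on `X`. -/
noncomputable def panIntegralOn [MeasurableSpace X] (mu : Set X → ℝ≥0∞) (f : X → ℝ≥0∞)
    (A : Set X) : ℝ≥0∞ :=
  panIntegral mu (A.indicator f)

/-- Subadditivity of a set function. -/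
def PanSubadditive [MeasurableSpace X] (mu : Set X → ℝ≥0∞) : Prop :=
  ∀ ⦃A B : Set X⦄, MeasurableSet A → MeasurableSet B → mu (A ∪ B) ≤ mu A + mu B

/-- Null-additivity of a set function. -/
def PanNullAdditive [MeasurableSpace X] (mu : Set X → ℝ≥0∞) : Prop :=
  ∀ ⦃A B : Set X⦄, MeasurableSet A → MeasurableSet B → mu B = 0 → mu (A ∪ B) = mu A

/-- Continuity from below of a set function. -/
def PanContinuousFromBelow [MeasurableSpace X] (mu : Set X → ℝ≥0∞) : Prop :=
  ∀ E : ℕ → Set X, (∀ n, MeasurableSet (E n)) → Monotone E →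
    Filter.Tendsto (fun n => mu (E n)) Filter.atTop (nhds (mu (⋃ n, E n)))

/-- A real-valued function is pan-integrable if the pan-integrals of its
positive and negative parts are both finite. -/
def PanIntegrable [MeasurableSpace X] (mu : Set X → ℝ≥0∞) (f : X → ℝ) : Prop :=
  panIntegral mu (fun x => ENNReal.ofReal (f x)) < ⊤ ∧
    panIntegral mu (fun x => ENNReal.ofReal (-f x)) < ⊤

/-- The symmetric pan-integral of a real-valued function:
`∫ f⁺ dμ − ∫ f⁻ dμ`. -/
noncomputable def panIntegralReal [MeasurableSpace X] (mu : Set X → ℝ≥0∞) (f : X → ℝ) : ℝ :=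
  (panIntegral mu (fun x => ENNReal.ofReal (f x))).toReal -
    (panIntegral mu (fun x => ENNReal.ofReal (-f x))).toReal

/-- The `‖·‖_{μ,p}` functional: `(∫_E^pan |f|^p dμ)^(1/p)`. -/
noncomputable def panNorm [MeasurableSpace X] (mu : Set X → ℝ≥0∞) (E : Set X) (p : ℝ)
    (f : X → ℝ) : ℝ≥0∞ :=
  (panIntegralOn mu (fun x => ENNReal.ofReal (|f x| ^ p)) E) ^ (1 / p)

/-! If an admissible simple function for `f·χ_{A∪B}` gives a piece `C` positive weight, then
`C ⊆ A ∪ B`, and subadditivity bounds `μ C` by `μ (C ∩ A) + μ (C ∩ B)`, where the pieces `C ∩ A`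
and `C ∩ B` carry admissible simple functions for `f·χ_A` and `f·χ_B`. Conversely, admissible simple
functions for `f·χ_A` and `f·χ_B` add up, on the common refinement of their partitions, to one for
`f·χ_A + f·χ_B = f·χ_{A∪B}`, and by subadditivity refining a partition does not decrease a lower
sum. -/

open Function

lemma sum_indicator_apply_of_mem {ι M : Type*} [Fintype ι] [AddCommMonoid M] {C : ι → Set X}
    (hdisj : Pairwise (Disjoint on C)) (c : ι → M) {k : ι} {x : X} (hx : x ∈ C k) :
    ∑ i, (C i).indicator (fun _ => c i) x = c k := by
  refine (Finset.sum_eq_single k (fun i _ hik => ?_) (by simp)).trans (indicator_of_mem hx _)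
  exact indicator_of_notMem (fun hxi => disjoint_left.mp (hdisj hik) hxi hx) _

lemma subset_of_sum_indicator_le_indicator {ι : Type*} [Fintype ι] {C : ι → Set X}
    {c : ι → ℝ≥0∞} {S : Set X} {g : X → ℝ≥0∞}
    (hle : ∀ x, ∑ i, (C i).indicator (fun _ => c i) x ≤ S.indicator g x) {k : ι} (hk : c k ≠ 0) :
    C k ⊆ S := by
  intro x hx
  by_contra hxS
  have hck : c k ≤ S.indicator g x :=
    calc c k = (C k).indicator (fun _ => c k) x := (indicator_of_mem hx (fun _ => c k)).symm
      _ ≤ ∑ i, (C i).indicator (fun _ => c i) x :=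
          Finset.single_le_sum (f := fun i => (C i).indicator (fun _ => c i) x)
            (fun _ _ => zero_le) (Finset.mem_univ k)
      _ ≤ S.indicator g x := hle x
  exact hk (le_zero_iff.mp (by rwa [indicator_of_notMem hxS] at hck))

lemma pairwise_disjoint_inter_prod {ι κ : Type*} {P : ι → Set X} {Q : κ → Set X}
    (hP : Pairwise (Disjoint on P)) (hQ : Pairwise (Disjoint on Q)) :
    Pairwise (Disjoint on fun p : ι × κ => P p.1 ∩ Q p.2) := by
  rintro ⟨i, j⟩ ⟨i', j'⟩ hne
  rcases eq_or_ne i i' with rfl | hi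
  · exact (hQ fun hj : j = j' => hne (by rw [hj])).mono inter_subset_right inter_subset_right
  · exact (hP hi).mono inter_subset_left inter_subset_left

section PanIntegral

variable [MeasurableSpace X] {mu : Set X → ℝ≥0∞}

lemma PanSubadditive.measure_biUnion_finset_le (hsub : PanSubadditive mu) (h0 : mu ∅ = 0)
    {ι : Type*} {C : ι → Set X} (hC : ∀ i, MeasurableSet (C i)) (s : Finset ι) :
    mu (⋃ i ∈ s, C i) ≤ ∑ i ∈ s, mu (C i) := by
  classical
  induction s using Finset.induction_on with
  | empty => simp [h0]
  | insert i s hi ih =>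
    rw [Finset.set_biUnion_insert, Finset.sum_insert hi]
    calc mu (C i ∪ ⋃ j ∈ s, C j) ≤ mu (C i) + mu (⋃ j ∈ s, C j) :=
          hsub (hC i) (s.measurableSet_biUnion fun j _ => hC j)
      _ ≤ mu (C i) + ∑ j ∈ s, mu (C j) := by gcongr

lemma PanSubadditive.measure_iUnion_fintype_le (hsub : PanSubadditive mu) (h0 : mu ∅ = 0)
    {ι : Type*} [Fintype ι] {C : ι → Set X} (hC : ∀ i, MeasurableSet (C i)) :
    mu (⋃ i, C i) ≤ ∑ i, mu (C i) := by
  simpa using hsub.measure_biUnion_finset_le h0 hC Finset.univ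

lemma PanSubadditive.measure_le_sum_inter (hsub : PanSubadditive mu) (h0 : mu ∅ = 0)
    {ι : Type*} [Fintype ι] {C : ι → Set X} (hC : ∀ i, MeasurableSet (C i))
    (hcover : ⋃ i, C i = univ) {S : Set X} (hS : MeasurableSet S) :
    mu S ≤ ∑ i, mu (S ∩ C i) := by
  simpa only [← inter_iUnion, hcover, inter_univ] using
    hsub.measure_iUnion_fintype_le h0 fun i => hS.inter (hC i)

lemma sum_le_panIntegral_of_partition {ι : Type*} [Fintype ι] {C : ι → Set X}
    (hC : ∀ i, MeasurableSet (C i)) (hdisj : Pairwise (Disjoint on C)) (hcover : ⋃ i, C i = univ)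
    {lam : ι → ℝ≥0} {g : X → ℝ≥0∞}
    (hle : ∀ x, ∑ i, (C i).indicator (fun _ => (lam i : ℝ≥0∞)) x ≤ g x) :
    ∑ i, (lam i : ℝ≥0∞) * mu (C i) ≤ panIntegral mu g := by
  let e := (Fintype.equivFin ι).symm
  have hpart : IsPanPartition (C ∘ e) :=
    ⟨fun k => hC (e k), hdisj.comp_of_injective e.injective,
      by rw [← hcover]; exact e.surjective.iUnion_comp C⟩
  rw [← e.sum_comp]
  refine le_iSup_of_le _ <| le_iSup₂_of_le (C ∘ e) hpart <|
    le_iSup₂_of_le (lam ∘ e) (fun x => ?_) le_rfl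
  exact (e.sum_comp fun i => (C i).indicator (fun _ => (lam i : ℝ≥0∞)) x).trans_le (hle x)

lemma sum_le_panIntegral_of_pairwiseDisjoint {ι : Type*} [Fintype ι] {C : ι → Set X}
    (hC : ∀ i, MeasurableSet (C i)) (hdisj : Pairwise (Disjoint on C))
    {lam : ι → ℝ≥0} {g : X → ℝ≥0∞}
    (hle : ∀ x, ∑ i, (C i).indicator (fun _ => (lam i : ℝ≥0∞)) x ≤ g x) :
    ∑ i, (lam i : ℝ≥0∞) * mu (C i) ≤ panIntegral mu g := by
  let D : Option ι → Set X := fun o => o.elim (⋃ i, C i)ᶜ C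
  have hD : ∀ o, MeasurableSet (D o)
    | none => (MeasurableSet.iUnion hC).compl
    | some i => hC i
  have hDdisj : Pairwise (Disjoint on D) := by
    rintro (_ | i) (_ | j) hij
    · exact absurd rfl hij
    · exact disjoint_compl_left.mono_right (subset_iUnion C j)
    · exact disjoint_compl_right.mono_left (subset_iUnion C i)
    · exact hdisj (Option.some_injective _ |>.ne_iff.mp hij)
  have hDcover : ⋃ o, D o = univ := by
    rw [iUnion_option]; exact compl_union_self _
  have := sum_le_panIntegral_of_partition (mu := mu) hD hDdisj hDcover
    (lam := fun o => o.elim 0 lam) (g := g) (fun x => by simpa [D, Fintype.sum_option] using hle x)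
  simpa [D, Fintype.sum_option] using this

lemma sum_mul_measure_inter_le_panIntegral_indicator {ι : Type*} [Fintype ι] {C : ι → Set X}
    (hC : ∀ i, MeasurableSet (C i)) (hdisj : Pairwise (Disjoint on C))
    {lam : ι → ℝ≥0} {g : X → ℝ≥0∞}
    (hle : ∀ x, ∑ i, (C i).indicator (fun _ => (lam i : ℝ≥0∞)) x ≤ g x)
    {S : Set X} (hS : MeasurableSet S) :
    ∑ i, (lam i : ℝ≥0∞) * mu (C i ∩ S) ≤ panIntegral mu (S.indicator g) := by
  refine sum_le_panIntegral_of_pairwiseDisjoint (fun i => (hC i).inter hS)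
    (fun i j hij => (hdisj hij).mono inter_subset_left inter_subset_left) fun x => ?_
  simp only [inter_comm _ S, ← indicator_indicator]
  by_cases hx : x ∈ S
  · simpa only [indicator_of_mem hx] using hle x
  · simp [hx]

lemma panIntegral_indicator_union_le (hsub : PanSubadditive mu) {A B : Set X}
    (hA : MeasurableSet A) (hB : MeasurableSet B) (f : X → ℝ≥0∞) :
    panIntegral mu ((A ∪ B).indicator f) ≤
      panIntegral mu (A.indicator f) + panIntegral mu (B.indicator f) := by
  refine iSup_le fun n => iSup₂_le fun C hC => iSup₂_le fun lam hle => ?_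
  obtain ⟨hCm, hCd, -⟩ := hC
  have hsplit : ∀ k, (lam k : ℝ≥0∞) * mu (C k) ≤
      lam k * mu (C k ∩ A) + lam k * mu (C k ∩ B) := by
    intro k
    rcases eq_or_ne (lam k : ℝ≥0∞) 0 with hk | hk
    · simp [hk]
    have hCk : C k ∩ A ∪ C k ∩ B = C k := by
      rw [← inter_union_distrib_left, inter_eq_left]
      exact subset_of_sum_indicator_le_indicator hle hk
    calc (lam k : ℝ≥0∞) * mu (C k) = lam k * mu (C k ∩ A ∪ C k ∩ B) := by rw [hCk]
      _ ≤ lam k * (mu (C k ∩ A) + mu (C k ∩ B)) := by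
          gcongr; exact hsub ((hCm k).inter hA) ((hCm k).inter hB)
      _ = _ := mul_add _ _ _
  calc ∑ k, (lam k : ℝ≥0∞) * mu (C k)
      ≤ ∑ k, ((lam k : ℝ≥0∞) * mu (C k ∩ A) + lam k * mu (C k ∩ B)) :=
        Finset.sum_le_sum fun k _ => hsplit k
    _ = ∑ k, (lam k : ℝ≥0∞) * mu (C k ∩ A) + ∑ k, (lam k : ℝ≥0∞) * mu (C k ∩ B) :=
        Finset.sum_add_distrib
    _ ≤ panIntegral mu (A.indicator ((A ∪ B).indicator f)) +
          panIntegral mu (B.indicator ((A ∪ B).indicator f)) :=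
        add_le_add (sum_mul_measure_inter_le_panIntegral_indicator hCm hCd hle hA)
          (sum_mul_measure_inter_le_panIntegral_indicator hCm hCd hle hB)
    _ = _ := by
        rw [indicator_indicator, indicator_indicator, inter_eq_left.mpr subset_union_left,
          inter_eq_left.mpr subset_union_right]

lemma sum_add_sum_le_panIntegral_add (h0 : mu ∅ = 0) (hsub : PanSubadditive mu) {n m : ℕ}
    {P : Fin n → Set X} {Q : Fin m → Set X} (hP : IsPanPartition P) (hQ : IsPanPartition Q)
    {lam : Fin n → ℝ≥0} {kap : Fin m → ℝ≥0} {g h : X → ℝ≥0∞}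
    (hg : ∀ x, ∑ i, (P i).indicator (fun _ => (lam i : ℝ≥0∞)) x ≤ g x)
    (hh : ∀ x, ∑ j, (Q j).indicator (fun _ => (kap j : ℝ≥0∞)) x ≤ h x) :
    ∑ i, (lam i : ℝ≥0∞) * mu (P i) + ∑ j, (kap j : ℝ≥0∞) * mu (Q j) ≤
      panIntegral mu (g + h) := by
  obtain ⟨hPm, hPd, hPc⟩ := hP
  obtain ⟨hQm, hQd, hQc⟩ := hQ
  let E : Fin n × Fin m → Set X := fun p => P p.1 ∩ Q p.2
  have hEm : ∀ p, MeasurableSet (E p) := fun p => (hPm p.1).inter (hQm p.2)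
  have hEd : Pairwise (Disjoint on E) := pairwise_disjoint_inter_prod hPd hQd
  have hEc : ⋃ p, E p = univ := by
    refine iUnion_eq_univ_iff.mpr fun x => ?_
    obtain ⟨i, hi⟩ := iUnion_eq_univ_iff.mp hPc x
    obtain ⟨j, hj⟩ := iUnion_eq_univ_iff.mp hQc x
    exact ⟨(i, j), hi, hj⟩
  have hEle : ∀ x, ∑ p, (E p).indicator (fun _ => ((lam p.1 + kap p.2 : ℝ≥0) : ℝ≥0∞)) x ≤
      (g + h) x := by
    intro x
    obtain ⟨⟨i, j⟩, hx⟩ := iUnion_eq_univ_iff.mp hEc x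
    rw [sum_indicator_apply_of_mem hEd _ hx, ENNReal.coe_add, Pi.add_apply]
    gcongr
    · simpa only [sum_indicator_apply_of_mem hPd _ hx.1] using hg x
    · simpa only [sum_indicator_apply_of_mem hQd _ hx.2] using hh x
  have hPE : ∀ i, mu (P i) ≤ ∑ j, mu (E (i, j)) := fun i =>
    hsub.measure_le_sum_inter h0 hQm hQc (hPm i)
  have hQE : ∀ j, mu (Q j) ≤ ∑ i, mu (E (i, j)) := fun j => by
    simpa only [E, inter_comm] using hsub.measure_le_sum_inter h0 hPm hPc (hQm j)
  calc ∑ i, (lam i : ℝ≥0∞) * mu (P i) + ∑ j, (kap j : ℝ≥0∞) * mu (Q j)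
      ≤ ∑ i, ∑ j, (lam i : ℝ≥0∞) * mu (E (i, j)) + ∑ j, ∑ i, (kap j : ℝ≥0∞) * mu (E (i, j)) := by
        simp only [← Finset.mul_sum]
        gcongr with i _ j _
        exacts [hPE i, hQE j]
    _ = ∑ p : Fin n × Fin m, ((lam p.1 : ℝ≥0∞) * mu (E p) + (kap p.2 : ℝ≥0∞) * mu (E p)) := by
        rw [Finset.sum_add_distrib, Fintype.sum_prod_type, Fintype.sum_prod_type_right]
    _ = ∑ p, ((lam p.1 + kap p.2 : ℝ≥0) : ℝ≥0∞) * mu (E p) := by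
        simp only [ENNReal.coe_add, add_mul]
    _ ≤ panIntegral mu (g + h) := sum_le_panIntegral_of_partition hEm hEd hEc hEle

def panLowerSums (mu : Set X → ℝ≥0∞) (g : X → ℝ≥0∞) : Set ℝ≥0∞ :=
  {s | ∃ (n : ℕ) (P : Fin n → Set X) (lam : Fin n → ℝ≥0), IsPanPartition P ∧
    (∀ x, ∑ i, (P i).indicator (fun _ => (lam i : ℝ≥0∞)) x ≤ g x) ∧
    ∑ i, (lam i : ℝ≥0∞) * mu (P i) = s}

lemma panIntegral_eq_sSup_panLowerSums (mu : Set X → ℝ≥0∞) (g : X → ℝ≥0∞) :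
    panIntegral mu g = sSup (panLowerSums mu g) := by
  refine le_antisymm (iSup_le fun n => iSup₂_le fun P hP => iSup₂_le fun lam hle =>
    le_sSup ⟨n, P, lam, hP, hle, rfl⟩) (sSup_le ?_)
  rintro _ ⟨n, P, lam, hP, hle, rfl⟩
  exact le_iSup_of_le n <| le_iSup₂_of_le P hP <| le_iSup₂_of_le lam hle le_rfl

lemma zero_mem_panLowerSums (mu : Set X → ℝ≥0∞) (g : X → ℝ≥0∞) :
    (0 : ℝ≥0∞) ∈ panLowerSums mu g :=
  ⟨1, fun _ => univ, fun _ => 0,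
    ⟨fun _ => MeasurableSet.univ, Subsingleton.pairwise, iUnion_const _⟩, by simp, by simp⟩

lemma le_panIntegral_add (h0 : mu ∅ = 0) (hsub : PanSubadditive mu) (g h : X → ℝ≥0∞) :
    panIntegral mu g + panIntegral mu h ≤ panIntegral mu (g + h) := by
  rw [panIntegral_eq_sSup_panLowerSums mu g, panIntegral_eq_sSup_panLowerSums mu h,
    sSup_eq_iSup, sSup_eq_iSup]
  refine ENNReal.biSup_add_biSup_le ⟨0, zero_mem_panLowerSums mu g⟩
    ⟨0, zero_mem_panLowerSums mu h⟩ ?_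
  rintro _ ⟨n, P, lam, hP, hg, rfl⟩ _ ⟨m, Q, kap, hQ, hh, rfl⟩
  exact sum_add_sum_le_panIntegral_add h0 hsub hP hQ hg hh

end PanIntegral

theorem panIntegralOn_union_of_disjoint_general [MeasurableSpace X]
    (mu : Set X → ℝ≥0∞) (hmu : MonotoneMeasure mu) (hsub : PanSubadditive mu)
    (f : X → ℝ≥0∞)
    {A B : Set X} (hA : MeasurableSet A) (hB : MeasurableSet B)
    (hAB : A ∩ B = ∅) :
    panIntegralOn mu f (A ∪ B) = panIntegralOn mu f A + panIntegralOn mu f B := by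
  refine le_antisymm (panIntegral_indicator_union_le hsub hA hB f) ?_
  unfold panIntegralOn
  rw [indicator_union_of_disjoint (disjoint_iff_inter_eq_empty.mpr hAB)]
  exact le_panIntegral_add hmu.empty hsub _ _

theorem panIntegralOn_union_of_disjoint [MeasurableSpace X]
    (mu : Set X → ℝ≥0∞) (hmu : MonotoneMeasure mu) (hsub : PanSubadditive mu)
    (f : X → ℝ≥0∞) (hf : Measurable f)
    {A B : Set X} (hA : MeasurableSet A) (hB : MeasurableSet B)
    (hAB : A ∩ B = ∅) :
    panIntegralOn mu f (A ∪ B) = panIntegralOn mu f A + panIntegralOn mu f B :=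
  panIntegralOn_union_of_disjoint_general mu hmu hsub f hA hB hAB
end

section
/- (Positive-sets-disjointness additivity) Let (X, 𝒜, μ) be a monotone measure space with μ subadditive and let f, g : X → [0, ∞] be measurable with {x : f(x) > 0} ∩ {x : g(x) > 0} = ∅. Then ∫^pan (f+g) dμ = ∫^pan f dμ + ∫^pan g dμ. -/
open Set Filter
open scoped ENNReal NNReal Topology

variable {X : Type*}

/-! A pan-integral sum for `f + g` splits, cell by cell, along the measurable set `S = {f > 0}`:
on `S` it only sees `f`, off `S` only `g`, and subadditivity of `μ` bounds `μ(C)` by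
`μ(C ∩ S) + μ(C \ S)`. Conversely, a cell carrying a positive coefficient for `f` lies in `S`
and one for `g` lies outside `S`, so admissible partitions for `f` and for `g` glue along `S`
into one for `f + g`. -/

theorem sum_indicator_le_iff {M ι : Type*} [AddCommMonoid M] [PartialOrder M]
    [IsOrderedAddMonoid M] [CanonicallyOrderedAdd M] [Fintype ι] {A : ι → Set X}
    (hA : Pairwise (Function.onFun Disjoint A)) {c : ι → M} {f : X → M} :
    (∀ x, ∑ i, (A i).indicator (fun _ => c i) x ≤ f x) ↔ ∀ i, ∀ x ∈ A i, c i ≤ f x := by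
  refine ⟨fun h i x hx => ?_, fun h x => ?_⟩
  · calc c i = (A i).indicator (fun _ => c i) x := (indicator_of_mem hx fun _ => c i).symm
      _ ≤ ∑ j, (A j).indicator (fun _ => c j) x :=
        Finset.single_le_sum (f := fun j => (A j).indicator (fun _ => c j) x)
          (fun j _ => zero_le) (Finset.mem_univ i)
      _ ≤ f x := h x
  · by_cases hx : ∃ i, x ∈ A i
    · obtain ⟨i, hi⟩ := hx
      rw [Finset.sum_eq_single_of_mem i (Finset.mem_univ i) fun j _ hji =>
        indicator_of_notMem (fun hj => (hA hji).ne_of_mem hj hi rfl) _, indicator_of_mem hi]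
      exact h i x hi
    · rw [Finset.sum_eq_zero fun i _ => indicator_of_notMem (not_exists.1 hx i) _]
      exact zero_le

theorem mul_apply_inter_eq_of_le {mu : Set X → ℝ≥0∞} {f : X → ℝ≥0∞} {A S : Set X} {c : ℝ≥0∞}
    (hc : ∀ x ∈ A, c ≤ f x) (hfS : ∀ x ∉ S, f x = 0) : c * mu (A ∩ S) = c * mu A := by
  rcases eq_or_ne c 0 with rfl | hc0
  · simp only [zero_mul]
  · refine congrArg (fun B => c * mu B) (inter_eq_left.2 fun x hx => ?_)
    by_contra hxS
    exact hc0 (le_zero_iff.1 (hfS x hxS ▸ hc x hx))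

section

variable [MeasurableSpace X]

def IsMeasurablePartition {ι : Type*} (A : ι → Set X) : Prop :=
  (∀ i, MeasurableSet (A i)) ∧ Pairwise (Function.onFun Disjoint A) ∧ ⋃ i, A i = univ

theorem isMeasurablePartition_const_univ {ι : Type*} [Subsingleton ι] [Nonempty ι] :
    IsMeasurablePartition (fun _ : ι => (univ : Set X)) :=
  ⟨fun _ => MeasurableSet.univ, fun i j h => (h (Subsingleton.elim i j)).elim, iUnion_const _⟩

namespace IsMeasurablePartition

variable {ι κ : Type*} {A : ι → Set X}

theorem comp_equiv (hA : IsMeasurablePartition A) (e : κ ≃ ι) :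
    IsMeasurablePartition (A ∘ e) :=
  ⟨fun k => hA.1 (e k), fun _ _ h => hA.2.1 (e.injective.ne h),
    (e.surjective.iUnion_comp A).trans hA.2.2⟩

theorem piecewise {B : κ → Set X} {S : Set X} (hA : IsMeasurablePartition A)
    (hB : IsMeasurablePartition B) (hS : MeasurableSet S) :
    IsMeasurablePartition (Sum.elim (fun i => A i ∩ S) (fun j => B j ∩ Sᶜ)) := by
  refine ⟨?_, ?_, ?_⟩
  · rintro (i | j)
    exacts [(hA.1 i).inter hS, (hB.1 j).inter hS.compl]
  · rintro (i | j) (i' | j') h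
    · exact (hA.2.1 fun e => h (congrArg _ e)).mono inter_subset_left inter_subset_left
    · exact disjoint_compl_right.mono inter_subset_right inter_subset_right
    · exact disjoint_compl_left.mono inter_subset_right inter_subset_right
    · exact (hB.2.1 fun e => h (congrArg _ e)).mono inter_subset_left inter_subset_left
  · simp only [iUnion_sum, Sum.elim_inl, Sum.elim_inr, ← iUnion_inter, hA.2.2, hB.2.2,
      univ_inter, union_compl_self]

end IsMeasurablePartition

variable {mu : Set X → ℝ≥0∞} {f g : X → ℝ≥0∞}

def panSums (mu : Set X → ℝ≥0∞) (f : X → ℝ≥0∞) : Set ℝ≥0∞ :=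
  {s | ∃ (n : ℕ) (A : Fin n → Set X) (lam : Fin n → ℝ≥0), IsMeasurablePartition A ∧
    (∀ i, ∀ x ∈ A i, (lam i : ℝ≥0∞) ≤ f x) ∧ ∑ i, (lam i : ℝ≥0∞) * mu (A i) = s}

theorem zero_mem_panSums : 0 ∈ panSums mu f :=
  ⟨1, fun _ => univ, 0, isMeasurablePartition_const_univ, by simp, by simp⟩

theorem panIntegral_eq_sSup_panSums (mu : Set X → ℝ≥0∞) (f : X → ℝ≥0∞) :
    panIntegral mu f = sSup (panSums mu f) := by
  refine le_antisymm (iSup₂_le fun n A => iSup₂_le fun hA lam => iSup_le fun hlam =>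
    le_sSup ⟨n, A, lam, hA, (sum_indicator_le_iff hA.2.1).1 hlam, rfl⟩) (sSup_le ?_)
  rintro _ ⟨n, A, lam, hA, hlam, rfl⟩
  exact le_iSup₂_of_le n A <| le_iSup₂_of_le hA lam <|
    le_iSup_of_le ((sum_indicator_le_iff hA.2.1).2 hlam) le_rfl

theorem le_panIntegral {ι : Type*} [Fintype ι] {A : ι → Set X} (hA : IsMeasurablePartition A)
    {lam : ι → ℝ≥0} (hlam : ∀ i, ∀ x ∈ A i, (lam i : ℝ≥0∞) ≤ f x) :
    ∑ i, (lam i : ℝ≥0∞) * mu (A i) ≤ panIntegral mu f := by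
  let e := (Fintype.equivFin ι).symm
  rw [panIntegral_eq_sSup_panSums]
  exact le_sSup ⟨_, A ∘ e, lam ∘ e, hA.comp_equiv e, fun i => hlam (e i),
    e.sum_comp fun i => (lam i : ℝ≥0∞) * mu (A i)⟩

theorem sum_mul_inter_le_panIntegral {ι : Type*} [Fintype ι] {A : ι → Set X}
    (hA : IsMeasurablePartition A) {S : Set X} (hS : MeasurableSet S) {lam : ι → ℝ≥0}
    (hlam : ∀ i, ∀ x ∈ A i ∩ S, (lam i : ℝ≥0∞) ≤ f x) :
    ∑ i, (lam i : ℝ≥0∞) * mu (A i ∩ S) ≤ panIntegral mu f := by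
  have hglued := le_panIntegral (mu := mu) (f := f)
    (hA.piecewise (isMeasurablePartition_const_univ (ι := Unit)) hS) (lam := Sum.elim lam 0)
    (by rintro (i | _) x hx; exacts [hlam i x hx, by simp])
  simpa [Fintype.sum_sum_type] using hglued

theorem panIntegral_add_le (hsub : PanSubadditive mu) {S : Set X} (hS : MeasurableSet S)
    (hfS : ∀ x ∉ S, f x = 0) (hgS : ∀ x ∈ S, g x = 0) :
    panIntegral mu (fun x => f x + g x) ≤ panIntegral mu f + panIntegral mu g := by
  rw [panIntegral_eq_sSup_panSums]
  refine sSup_le ?_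
  rintro _ ⟨n, C, tau, hC, htau, rfl⟩
  have htau_f : ∀ i, ∀ x ∈ C i ∩ S, (tau i : ℝ≥0∞) ≤ f x := fun i x hx => by
    simpa [hgS x hx.2] using htau i x hx.1
  have htau_g : ∀ i, ∀ x ∈ C i ∩ Sᶜ, (tau i : ℝ≥0∞) ≤ g x := fun i x hx => by
    simpa [hfS x hx.2] using htau i x hx.1
  calc ∑ i, (tau i : ℝ≥0∞) * mu (C i)
      ≤ ∑ i, ((tau i : ℝ≥0∞) * mu (C i ∩ S) + (tau i : ℝ≥0∞) * mu (C i ∩ Sᶜ)) := by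
        refine Finset.sum_le_sum fun i _ => ?_
        rw [← mul_add]
        gcongr
        calc mu (C i) = mu (C i ∩ S ∪ C i ∩ Sᶜ) := by rw [inter_union_compl]
          _ ≤ _ := hsub ((hC.1 i).inter hS) ((hC.1 i).inter hS.compl)
    _ = ∑ i, (tau i : ℝ≥0∞) * mu (C i ∩ S) + ∑ i, (tau i : ℝ≥0∞) * mu (C i ∩ Sᶜ) :=
        Finset.sum_add_distrib
    _ ≤ panIntegral mu f + panIntegral mu g :=
        add_le_add (sum_mul_inter_le_panIntegral hC hS htau_f)
          (sum_mul_inter_le_panIntegral hC hS.compl htau_g)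

theorem le_panIntegral_add_s9 {S : Set X} (hS : MeasurableSet S) (hfS : ∀ x ∉ S, f x = 0)
    (hgS : ∀ x ∈ S, g x = 0) :
    panIntegral mu f + panIntegral mu g ≤ panIntegral mu (fun x => f x + g x) := by
  simp only [panIntegral_eq_sSup_panSums mu f, panIntegral_eq_sSup_panSums mu g, sSup_eq_iSup]
  refine ENNReal.biSup_add_biSup_le ⟨0, zero_mem_panSums⟩ ⟨0, zero_mem_panSums⟩ ?_
  rintro _ ⟨n, A, lamA, hA, hlamA, rfl⟩ _ ⟨m, B, lamB, hB, hlamB, rfl⟩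
  have hgSc : ∀ x ∉ Sᶜ, g x = 0 := fun x hx => hgS x (not_notMem.1 hx)
  have hglued := le_panIntegral (mu := mu) (f := fun x => f x + g x) (hA.piecewise hB hS)
    (lam := Sum.elim lamA lamB) (by
      rintro (i | j) x hx
      exacts [(hlamA i x hx.1).trans le_self_add, (hlamB j x hx.1).trans le_add_self])
  rw [Fintype.sum_sum_type] at hglued
  simpa only [Sum.elim_inl, Sum.elim_inr, mul_apply_inter_eq_of_le (hlamA _) hfS,
    mul_apply_inter_eq_of_le (hlamB _) hgSc] using hglued

end

theorem panIntegral_add_of_disjoint_pos_sets_general [MeasurableSpace X]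
    (mu : Set X → ℝ≥0∞) (hsub : PanSubadditive mu)
    (f g : X → ℝ≥0∞) (hf : Measurable f)
    (hdisj : {x | 0 < f x} ∩ {x | 0 < g x} = ∅) :
    panIntegral mu (fun x => f x + g x) = panIntegral mu f + panIntegral mu g := by
  have hF : MeasurableSet {x | 0 < f x} := measurableSet_lt measurable_const hf
  have hfF : ∀ x ∉ {x | 0 < f x}, f x = 0 := fun x hx => nonpos_iff_eq_zero.1 (not_lt.1 hx)
  have hgF : ∀ x ∈ {x | 0 < f x}, g x = 0 := fun x hx => by
    by_contra hgx
    exact eq_empty_iff_forall_notMem.1 hdisj x ⟨hx, pos_iff_ne_zero.2 hgx⟩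
  exact le_antisymm (panIntegral_add_le hsub hF hfF hgF) (le_panIntegral_add_s9 hF hfF hgF)

theorem panIntegral_add_of_disjoint_pos_sets [MeasurableSpace X]
    (mu : Set X → ℝ≥0∞) (hmu : MonotoneMeasure mu) (hsub : PanSubadditive mu)
    (f g : X → ℝ≥0∞) (hf : Measurable f) (hg : Measurable g)
    (hdisj : {x | 0 < f x} ∩ {x | 0 < g x} = ∅) :
    panIntegral mu (fun x => f x + g x) = panIntegral mu f + panIntegral mu g :=
  panIntegral_add_of_disjoint_pos_sets_general mu hsub f g hf hdisj
end

section
/- Let (X, 𝒜, μ) be a monotone measure space and f : X → ℝ measurable. If |f| is pan-integrable then f is pan-integrable. Moreover, if μ is subadditive, then f is pan-integrable if and only if |f| is pan-integrable. -/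
open Set Filter
open scoped ENNReal NNReal Topology

variable {X : Type*}

/-! Subadditivity lets one split an admissible simple function below `|f|` along the measurable
set `{f ≥ 0}`: its two halves lie below `f⁺` and `f⁻`, so `∫ |f| ≤ ∫ f⁺ + ∫ f⁻`. Conversely
`f⁺, f⁻ ≤ |f|` and the pan-integral is monotone. -/

section

variable [MeasurableSpace X] {mu : Set X → ℝ≥0∞}

lemma panIntegral_mono {g h : X → ℝ≥0∞} (hgh : g ≤ h) :
    panIntegral mu g ≤ panIntegral mu h :=
  iSup_mono fun _ => iSup_mono fun _ => iSup_mono fun _ => iSup_mono fun _ =>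
    iSup_mono' fun hle => ⟨fun x => (hle x).trans (hgh x), le_rfl⟩

lemma le_panIntegral_s12 {n : ℕ} {A : Fin n → Set X} (hA : IsPanPartition A) {lam : Fin n → ℝ≥0}
    {g : X → ℝ≥0∞} (hle : ∀ x, ∑ i, (A i).indicator (fun _ => (lam i : ℝ≥0∞)) x ≤ g x) :
    ∑ i, (lam i : ℝ≥0∞) * mu (A i) ≤ panIntegral mu g :=
  le_iSup_of_le n <| le_iSup_of_le A <| le_iSup_of_le hA <| le_iSup_of_le lam <|
    le_iSup_of_le hle le_rfl

lemma IsPanPartition.snoc_inter_compl {n : ℕ} {A : Fin n → Set X} (hA : IsPanPartition A)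
    {S : Set X} (hS : MeasurableSet S) :
    IsPanPartition (Fin.snoc (fun i => A i ∩ S) Sᶜ : Fin (n + 1) → Set X) := by
  obtain ⟨hmeas, hdisj, hcover⟩ := hA
  refine ⟨fun i => ?_, fun i j hij => ?_, ?_⟩
  · rcases Fin.eq_castSucc_or_eq_last i with ⟨i, rfl⟩ | rfl
    · simpa using (hmeas i).inter hS
    · simpa using hS.compl
  · rcases Fin.eq_castSucc_or_eq_last i with ⟨i, rfl⟩ | rfl <;>
      rcases Fin.eq_castSucc_or_eq_last j with ⟨j, rfl⟩ | rfl
    · have hne : i ≠ j := fun h => hij (by rw [h])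
      simpa [Function.onFun] using (hdisj hne).mono inter_subset_left inter_subset_left
    · simpa [Function.onFun] using (disjoint_compl_right.mono_left inter_subset_right)
    · simpa [Function.onFun] using (disjoint_compl_left.mono_right inter_subset_right)
    · exact absurd rfl hij
  · refine eq_univ_of_forall fun x => ?_
    by_cases hx : x ∈ S
    · obtain ⟨i, hi⟩ := mem_iUnion.1 (hcover ▸ mem_univ x)
      exact mem_iUnion.2 ⟨i.castSucc, by simpa using ⟨hi, hx⟩⟩
    · exact mem_iUnion.2 ⟨Fin.last n, by simpa using hx⟩

/-- Witness: the partition `A i ∩ S`, `Sᶜ` with coefficients `lam i` and `0`. -/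
lemma sum_mul_inter_le_panIntegralOn {n : ℕ} {A : Fin n → Set X} (hA : IsPanPartition A)
    {lam : Fin n → ℝ≥0} {S : Set X} (hS : MeasurableSet S) {g : X → ℝ≥0∞}
    (hle : ∀ x, ∑ i, (A i).indicator (fun _ => (lam i : ℝ≥0∞)) x ≤ g x) :
    ∑ i, (lam i : ℝ≥0∞) * mu (A i ∩ S) ≤ panIntegralOn mu g S := by
  have hle' : ∀ x, ∑ j : Fin (n + 1),
      ((Fin.snoc (fun i => A i ∩ S) Sᶜ : Fin (n + 1) → Set X) j).indicator
        (fun _ => ((Fin.snoc lam 0 : Fin (n + 1) → ℝ≥0) j : ℝ≥0∞)) x ≤ S.indicator g x := by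
    intro x
    simp only [Fin.sum_univ_castSucc, Fin.snoc_castSucc, Fin.snoc_last, ENNReal.coe_zero,
      indicator_zero, add_zero]
    by_cases hx : x ∈ S
    · rw [indicator_of_mem hx]
      refine le_trans (Finset.sum_le_sum fun i _ => ?_) (hle x)
      exact indicator_le_indicator_of_subset inter_subset_left (fun _ => zero_le) x
    · simp [hx]
  simpa [Fin.sum_univ_castSucc, panIntegralOn] using le_panIntegral_s12 (hA.snoc_inter_compl hS) hle'

lemma panIntegral_le_panIntegralOn_add_panIntegralOn_compl (hsub : PanSubadditive mu)
    (g : X → ℝ≥0∞) {S : Set X} (hS : MeasurableSet S) :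
    panIntegral mu g ≤ panIntegralOn mu g S + panIntegralOn mu g Sᶜ := by
  refine iSup_le fun n => iSup_le fun A => iSup_le fun hA => iSup_le fun lam =>
    iSup_le fun hle => ?_
  calc ∑ i, (lam i : ℝ≥0∞) * mu (A i)
      ≤ ∑ i, (lam i : ℝ≥0∞) * (mu (A i ∩ S) + mu (A i ∩ Sᶜ)) := by
        refine Finset.sum_le_sum fun i _ => mul_le_mul_right ?_ _
        conv_lhs => rw [← inter_union_compl (A i) S]
        exact hsub ((hA.1 i).inter hS) ((hA.1 i).inter hS.compl)
    _ = ∑ i, (lam i : ℝ≥0∞) * mu (A i ∩ S) + ∑ i, (lam i : ℝ≥0∞) * mu (A i ∩ Sᶜ) := by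
        simp only [mul_add, Finset.sum_add_distrib]
    _ ≤ panIntegralOn mu g S + panIntegralOn mu g Sᶜ :=
        add_le_add (sum_mul_inter_le_panIntegralOn hA hS hle)
          (sum_mul_inter_le_panIntegralOn hA hS.compl hle)

lemma panIntegral_abs_le (hsub : PanSubadditive mu) {f : X → ℝ} (hf : Measurable f) :
    panIntegral mu (fun x => ENNReal.ofReal |f x|) ≤
      panIntegral mu (fun x => ENNReal.ofReal (f x)) +
        panIntegral mu (fun x => ENNReal.ofReal (-f x)) := by
  have hS : MeasurableSet {x | 0 ≤ f x} := measurableSet_le measurable_const hf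
  refine (panIntegral_le_panIntegralOn_add_panIntegralOn_compl hsub _ hS).trans
    (add_le_add (panIntegral_mono fun x => ?_) (panIntegral_mono fun x => ?_))
  · by_cases hx : 0 ≤ f x
    · simp [hx, abs_of_nonneg hx]
    · simp [hx]
  · by_cases hx : 0 ≤ f x
    · simp [hx]
    · simp [hx, abs_of_neg (not_le.1 hx)]

lemma PanIntegrable.of_abs {f : X → ℝ} (h : PanIntegrable mu fun x => |f x|) :
    PanIntegrable mu f :=
  ⟨(panIntegral_mono fun x => ENNReal.ofReal_le_ofReal (le_abs_self (f x))).trans_lt h.1,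
    (panIntegral_mono fun x => ENNReal.ofReal_le_ofReal (neg_le_abs (f x))).trans_lt h.1⟩

lemma PanIntegrable.abs (hsub : PanSubadditive mu) {f : X → ℝ} (hf : Measurable f)
    (h : PanIntegrable mu f) : PanIntegrable mu fun x => |f x| :=
  ⟨(panIntegral_abs_le hsub hf).trans_lt (ENNReal.add_lt_top.2 h),
    (panIntegral_mono fun x => ENNReal.ofReal_le_ofReal (neg_abs_le (f x))).trans_lt h.1⟩

end

theorem panIntegrable_of_abs_and_iff_general [MeasurableSpace X]
    (mu : Set X → ℝ≥0∞)
    (f : X → ℝ) (hf : Measurable f) :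
    (PanIntegrable mu (fun x => |f x|) → PanIntegrable mu f) ∧
      (PanSubadditive mu →
        (PanIntegrable mu f ↔ PanIntegrable mu (fun x => |f x|))) :=
  ⟨PanIntegrable.of_abs, fun hsub => ⟨PanIntegrable.abs hsub hf, PanIntegrable.of_abs⟩⟩

theorem panIntegrable_of_abs_and_iff [MeasurableSpace X]
    (mu : Set X → ℝ≥0∞) (hmu : MonotoneMeasure mu)
    (f : X → ℝ) (hf : Measurable f) :
    (PanIntegrable mu (fun x => |f x|) → PanIntegrable mu f) ∧
      (PanSubadditive mu →
        (PanIntegrable mu f ↔ PanIntegrable mu (fun x => |f x|))) :=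
  panIntegrable_of_abs_and_iff_general mu f hf
end
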